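/- For every λ ∈ [0,1], every real x > 0 and every real y ≥ 0, one has |√x − √y| ≤ x^{−(1−λ)/2} · |x − y|^{1−λ/2}. -/
import Mathlib


/-- Square-root interpolation inequality (Lemma 2.4):
for `λ ∈ [0,1]`, `x > 0`, `y ≥ 0`,
`|√x − √y| ≤ x^(−(1−λ)/2) * |x − y|^(1−λ/2)`. -/
theorem sqrt_interpolation_inequality
    (lam : ℝ) (hlam : lam ∈ Set.Icc (0 : ℝ) 1)
    (x y : ℝ) (hx : 0 < x) (hy : 0 ≤ y) :
    |Real.sqrt x - Real.sqrt y| ≤ x ^ (-(1 - lam) / 2) * |x - y| ^ (1 - lam / 2) := by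
  obtain ⟨h0, h1⟩ := hlam
  set c := |Real.sqrt x - Real.sqrt y| with hc
  have hsx : Real.sqrt x ^ 2 = x := Real.sq_sqrt hx.le
  have hsy : Real.sqrt y ^ 2 = y := Real.sq_sqrt hy
  have hsxpos : 0 < Real.sqrt x := Real.sqrt_pos.mpr hx
  have hsy0 : 0 ≤ Real.sqrt y := Real.sqrt_nonneg y
  have hc0 : 0 ≤ c := abs_nonneg _
  rcases eq_or_lt_of_le hc0 with hc0' | hcpos
  · -- c = 0
    rw [← hc0']
    positivity
  -- c > 0, so x ≠ y
  have hxy : x ≠ y := by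
    intro h
    apply hcpos.ne
    rw [hc, h, sub_self, abs_zero]
  have habs : 0 < |x - y| := abs_pos.mpr (sub_ne_zero.mpr hxy)
  -- key product formula
  have key : c * (Real.sqrt x + Real.sqrt y) = |x - y| := by
    have : (Real.sqrt x - Real.sqrt y) * (Real.sqrt x + Real.sqrt y) = x - y := by
      nlinarith [hsx, hsy]
    rw [hc, ← abs_of_nonneg (by positivity : (0:ℝ) ≤ Real.sqrt x + Real.sqrt y),
      ← abs_mul, this]
  set a : ℝ := x ^ (-(1:ℝ)/2) * |x - y| with ha
  set b : ℝ := |x - y| ^ ((1:ℝ)/2) with hb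
  have ha0 : 0 ≤ a := by positivity
  have hb0 : 0 ≤ b := by positivity
  -- bound 1 : c ≤ a
  have hca : c ≤ a := by
    have h1' : c * Real.sqrt x ≤ |x - y| := by
      nlinarith [key, hc0, hsy0]
    have hxinv : x ^ (-(1:ℝ)/2) = (Real.sqrt x)⁻¹ := by
      rw [show (-(1:ℝ)/2) = -(1/2) by norm_num, Real.rpow_neg hx.le, ← Real.sqrt_eq_rpow]
    rw [ha, hxinv, inv_mul_eq_div, le_div_iff₀ hsxpos]
    linarith
  -- bound 2 : c ≤ b
  have hcb : c ≤ b := by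
    have hsq : c ^ 2 ≤ |x - y| := by
      rw [hc, sq_abs]
      rcases le_total y x with h | h
      · rw [abs_of_nonneg (by linarith)]
        have : Real.sqrt y ≤ Real.sqrt x := Real.sqrt_le_sqrt h
        nlinarith [hsx, hsy, hsy0]
      · rw [abs_of_nonpos (by linarith)]
        have : Real.sqrt x ≤ Real.sqrt y := Real.sqrt_le_sqrt h
        nlinarith [hsx, hsy, hsxpos.le]
    have : c ≤ Real.sqrt |x - y| := by
      rw [← Real.sqrt_sq hc0]
      exact Real.sqrt_le_sqrt hsq
    rwa [hb, ← Real.sqrt_eq_rpow]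
  -- interpolation
  have hstep : c ≤ a ^ (1 - lam) * b ^ lam := by
    calc c = c ^ ((1 - lam) + lam) := by rw [show (1 - lam) + lam = 1 by ring, Real.rpow_one]
    _ = c ^ (1 - lam) * c ^ lam := Real.rpow_add hcpos _ _
    _ ≤ a ^ (1 - lam) * b ^ lam :=
        mul_le_mul (Real.rpow_le_rpow hc0 hca (by linarith))
          (Real.rpow_le_rpow hc0 hcb h0) (Real.rpow_nonneg hc0 _) (Real.rpow_nonneg ha0 _)
  refine hstep.trans_eq ?_
  rw [ha, hb, Real.mul_rpow (by positivity) habs.le,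
    ← Real.rpow_mul hx.le, ← Real.rpow_mul habs.le,
    mul_assoc, ← Real.rpow_add habs]
  congr 1
  · congr 1; ring
  · ring
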